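/- Let x^(1) ∈ ℝ^{B_1}, x^(2) ∈ ℝ^{B_2}, and let x = [x^(1) x^(2)] ∈ ℝ^{B_1 + B_2} be their concatenation. Let V_1 ∈ ℝ^{B_1 × d}, V_2 ∈ ℝ^{B_2 × d}, and let V ∈ ℝ^{(B_1 + B_2) × d} be their row-wise stacking. Define the partial output o^(1) := Σ_{j=1}^{B_1} softmax(x^(1))_j (V_1)_{j,:} ∈ ℝ^d. Then the full output satisfies Σ_{l} softmax(x)_l V_{l,:} = ℓ(x)^{-1} ( ℓ(x^(1)) e^{m(x^(1)) − m(x)} o^(1) + e^{m(x^(2)) − m(x)} Σ_{j=1}^{B_2} f(x^(2))_j (V_2)_{j,:} ). -/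
import Mathlib


/-- Row-wise softmax of a vector `x ∈ ℝ^B`: `softmax(x)_i = e^{x_i} / Σ_j e^{x_j}`. -/
noncomputable def softmax {B : ℕ} (x : Fin B → ℝ) : Fin B → ℝ :=
  fun i => Real.exp (x i) / ∑ j, Real.exp (x j)

/-- `m(x) := max_{1 ≤ i ≤ B} x_i`. -/
noncomputable def vmax {B : ℕ} (hB : 0 < B) (x : Fin B → ℝ) : ℝ :=
  Finset.univ.sup' (Finset.univ_nonempty_iff.mpr ⟨⟨0, hB⟩⟩) x

/-- `f(x)_i := e^{x_i - m(x)}`. -/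
noncomputable def fvec {B : ℕ} (hB : 0 < B) (x : Fin B → ℝ) : Fin B → ℝ :=
  fun i => Real.exp (x i - vmax hB x)

/-- `ℓ(x) := Σ_i f(x)_i`. -/
noncomputable def lsum {B : ℕ} (hB : 0 < B) (x : Fin B → ℝ) : ℝ :=
  ∑ i, fvec hB x i

/-- For the concatenation `x = [x⁽¹⁾ x⁽²⁾]` and the row-wise stacking `V = [V₁; V₂]`,
with partial output `o⁽¹⁾ := Σ_j softmax(x⁽¹⁾)_j (V₁)_{j,:}`, the full output satisfies
`Σ_l softmax(x)_l V_{l,:}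
  = ℓ(x)⁻¹ (ℓ(x⁽¹⁾) e^{m(x⁽¹⁾) - m(x)} o⁽¹⁾ + e^{m(x⁽²⁾) - m(x)} Σ_j f(x⁽²⁾)_j (V₂)_{j,:})`. -/
theorem attention_output_block_update {B₁ B₂ d : ℕ} (h₁ : 0 < B₁) (h₂ : 0 < B₂)
    (x₁ : Fin B₁ → ℝ) (x₂ : Fin B₂ → ℝ)
    (V₁ : Fin B₁ → Fin d → ℝ) (V₂ : Fin B₂ → Fin d → ℝ) :
    (∑ l, softmax (Fin.append x₁ x₂) l • Fin.append V₁ V₂ l) =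
      (lsum (by omega) (Fin.append x₁ x₂))⁻¹ •
        ((lsum h₁ x₁ * Real.exp (vmax h₁ x₁ - vmax (by omega) (Fin.append x₁ x₂))) •
            (∑ j, softmax x₁ j • V₁ j) +
          Real.exp (vmax h₂ x₂ - vmax (by omega) (Fin.append x₁ x₂)) •
            ∑ j, fvec h₂ x₂ j • V₂ j) := by
  funext i
  have hS₁ : (0:ℝ) < ∑ j, Real.exp (x₁ j) :=
    Finset.sum_pos (fun j _ => Real.exp_pos _) ⟨⟨0, h₁⟩, Finset.mem_univ _⟩
  have hL₁ : (0:ℝ) < lsum h₁ x₁ :=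
    Finset.sum_pos (fun j _ => Real.exp_pos _) ⟨⟨0, h₁⟩, Finset.mem_univ _⟩
  have hS₂ : (0:ℝ) < ∑ j, Real.exp (x₂ j) :=
    Finset.sum_pos (fun j _ => Real.exp_pos _) ⟨⟨0, h₂⟩, Finset.mem_univ _⟩
  simp only [Finset.sum_apply, Pi.smul_apply, Pi.add_apply, smul_eq_mul,
    softmax, lsum, fvec, Real.exp_sub, Fin.sum_univ_add, Fin.append_left, Fin.append_right,
    div_mul_eq_mul_div, ← Finset.sum_div]
  field_simp
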